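/- Let B(x,y) = (q,p) with q = −(1−x₀)(y₁,y₂,y₃) − y₀(x₁,x₂,x₃), p = (x₁,x₂,x₃)/(1−x₀), where x lies on the hyperboloid x₀² − x₁² − x₂² − x₃² = 1, x₀ > 1, and y satisfies ⟨x,y⟩_{1,3} = 0 with ⟨y,y⟩_{1,3} < 0 (Minkowski signature (+,−,−,−)). Then |q| = √(−⟨y,y⟩_{1,3})·(x₀ − 1) and |p|² − 1 = 2/(x₀ − 1), so K₋(q,p) = |q|(|p|²−1) − 2 = 2√(−⟨y,y⟩_{1,3}) − 2; thus K₋(q,p) = 0 iff ⟨y,y⟩_{1,3} = −1. -/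

import Mathlib

open scoped RealInnerProductSpace

noncomputable section

abbrev E3 := EuclideanSpace ℝ (Fin 3)
abbrev E4 := EuclideanSpace ℝ (Fin 4)

def tl (x : E4) : E3 := WithLp.toLp 2 (fun i : Fin 3 => x i.succ)

/-- Minkowski inner product of signature (+,−,−,−) on ℝ⁴. -/
def mink (x y : E4) : ℝ := x 0 * y 0 - x 1 * y 1 - x 2 * y 2 - x 3 * y 3

/-- q-component of the Belbruno map. -/
def belQ (x y : E4) : E3 := -((1 - x 0) • tl y) - (y 0) • tl x

/-- p-component of the Belbruno map. -/
def belP (x : E4) : E3 := (1 - x 0)⁻¹ • tl x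

lemma norm_sq_E3 (v : E3) : ‖v‖ ^ 2 = v 0 ^ 2 + v 1 ^ 2 + v 2 ^ 2 := by
  rw [EuclideanSpace.norm_sq_eq, Fin.sum_univ_three]
  simp [sq_abs]

lemma fin_succ0 : (0 : Fin 3).succ = (1 : Fin 4) := rfl
lemma fin_succ1 : (1 : Fin 3).succ = (2 : Fin 4) := rfl
lemma fin_succ2 : (2 : Fin 3).succ = (3 : Fin 4) := rfl

theorem belbruno_basic_identities (x y : E4)
    (hx : mink x x = 1) (hx0 : x 0 > 1)
    (hxy : mink x y = 0) (hy : mink y y < 0) :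
    ‖belQ x y‖ = Real.sqrt (-mink y y) * (x 0 - 1) ∧
    ‖belP x‖ ^ 2 - 1 = 2 / (x 0 - 1) ∧
    ‖belQ x y‖ * (‖belP x‖ ^ 2 - 1) - 2 = 2 * Real.sqrt (-mink y y) - 2 ∧
    (‖belQ x y‖ * (‖belP x‖ ^ 2 - 1) - 2 = 0 ↔ mink y y = -1) := by
  have hx' := hx
  have hxy' := hxy
  have hy' := hy
  simp only [mink] at hx' hxy' hy'
  have ha : x 0 - 1 > 0 := by linarith
  have ha' : (1 : ℝ) - x 0 ≠ 0 := by linarith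
  have hm : 0 < -mink y y := by linarith
  have hQ2 : ‖belQ x y‖ ^ 2 = (-mink y y) * (x 0 - 1) ^ 2 := by
    rw [norm_sq_E3]
    simp only [belQ, tl, PiLp.sub_apply, PiLp.neg_apply, PiLp.smul_apply, smul_eq_mul, PiLp.toLp_apply,
      fin_succ0, fin_succ1, fin_succ2, mink]
    linear_combination (-(y 0 ^ 2)) * hx' + (-2 * (1 - x 0) * y 0) * hxy'
  have hP : ‖belP x‖ ^ 2 - 1 = 2 / (x 0 - 1) := by
    rw [norm_sq_E3]
    simp only [belP, tl, PiLp.smul_apply, smul_eq_mul, PiLp.toLp_apply, fin_succ0, fin_succ1, fin_succ2]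
    field_simp
    linear_combination (1 - x 0) * hx'
  have hQ : ‖belQ x y‖ = Real.sqrt (-mink y y) * (x 0 - 1) := by
    have : ‖belQ x y‖ = Real.sqrt ((-mink y y) * (x 0 - 1) ^ 2) := by
      rw [← hQ2, Real.sqrt_sq (norm_nonneg _)]
    rw [this, Real.sqrt_mul hm.le, Real.sqrt_sq ha.le]
  refine ⟨hQ, hP, ?_, ?_⟩
  · rw [hQ, hP]
    field_simp
  · rw [hQ, hP]
    have h3 : Real.sqrt (-mink y y) * (x 0 - 1) * (2 / (x 0 - 1)) - 2 =
        2 * Real.sqrt (-mink y y) - 2 := by field_simp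
    rw [h3]
    constructor
    · intro h
      have hs : Real.sqrt (-mink y y) = 1 := by linarith
      have := Real.sq_sqrt hm.le
      rw [hs] at this
      nlinarith [this]
    · intro h
      rw [h]
      norm_num
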